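/- arXiv:2509.22314 — 2 statements merged into one kernel-verified Lean document; each statement's English description precedes it below -/
import Mathlib

section
/- Let n be a prime, M = {z ∈ ℤⁿ : Σ z_i = 0}, σ the cyclic shift on M, and κ : M → ℂˣ a nontrivial group homomorphism invariant under σ (i.e. κ ∘ σ = κ). Then κ(e_i − e_j) ≠ 1 for all i ≠ j. -/
/-- The lattice `M = {z ∈ ℤⁿ : z₀ + ⋯ + z_{n-1} = 0}`. -/
def sumZero (n : ℕ) : AddSubgroup (Fin n → ℤ) where
  carrier := {z | ∑ i, z i = 0}
  zero_mem' := by simp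
  add_mem' := by
    intro a b ha hb
    simp only [Set.mem_setOf_eq, Pi.add_apply, Finset.sum_add_distrib] at *
    simp [ha, hb]
  neg_mem' := by
    intro a ha
    simp only [Set.mem_setOf_eq, Pi.neg_apply, Finset.sum_neg_distrib] at *
    simp [ha]

/-- The cyclic shift `(σz)_i = z_{i+1}` on `ℤⁿ`. -/
def shiftFun (n : ℕ) [NeZero n] : (Fin n → ℤ) →+ (Fin n → ℤ) where
  toFun z := fun i => z (i + 1)
  map_zero' := rfl
  map_add' _ _ := rfl

lemma shift_mem_sumZero (n : ℕ) [NeZero n] (z : Fin n → ℤ) (hz : z ∈ sumZero n) :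
    shiftFun n z ∈ sumZero n := by
  simpa [sumZero, shiftFun, Fintype.sum_equiv (Equiv.addRight (1 : Fin n))
    (fun i => z (i + 1)) z (fun i => rfl)] using hz

/-- The cyclic shift as an endomorphism of `M`. -/
def shiftM (n : ℕ) [NeZero n] : sumZero n →+ sumZero n :=
  AddMonoidHom.codRestrict ((shiftFun n).comp (sumZero n).subtype) (sumZero n)
    (fun z => shift_mem_sumZero n z.1 z.2)

lemma eDiff_mem (n : ℕ) [DecidableEq (Fin n)] (i j : Fin n) :
    (Pi.single i 1 - Pi.single j 1 : Fin n → ℤ) ∈ sumZero n := by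
  simp [sumZero, Finset.sum_sub_distrib]

/-- The element `e_i - e_j` of `M`. -/
def eDiff (n : ℕ) [DecidableEq (Fin n)] (i j : Fin n) : sumZero n :=
  ⟨Pi.single i 1 - Pi.single j 1, eDiff_mem n i j⟩



lemma shiftM_eDiff (n : ℕ) [NeZero n] (a b : Fin n) :
    shiftM n (eDiff n (a + 1) (b + 1)) = eDiff n a b := by
  apply Subtype.ext
  funext i
  show (Pi.single (a+1) 1 - Pi.single (b+1) 1 : Fin n → ℤ) (i + 1)
      = (Pi.single a 1 - Pi.single b 1 : Fin n → ℤ) i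
  simp [Pi.single_apply]

lemma eDiff_add (n : ℕ) [NeZero n] (a b c : Fin n) :
    eDiff n a b + eDiff n b c = eDiff n a c := by
  apply Subtype.ext
  show (Pi.single a 1 - Pi.single b 1) + (Pi.single b 1 - Pi.single c 1)
      = (Pi.single a 1 - Pi.single c 1 : Fin n → ℤ)
  ring

lemma eDiff_self (n : ℕ) [NeZero n] (a : Fin n) : eDiff n a a = 0 := by
  apply Subtype.ext; show Pi.single a 1 - Pi.single a 1 = (0 : Fin n → ℤ); ring

lemma addChar_map_sum {A : Type*} [AddCommGroup A] (κ : AddChar A ℂˣ)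
    {ι : Type*} (s : Finset ι) (f : ι → A) :
    κ (∑ i ∈ s, f i) = ∏ i ∈ s, κ (f i) :=
  Finset.cons_induction (by simp) (fun a t ha ih => by
    rw [Finset.sum_cons, Finset.prod_cons, AddChar.map_add_eq_mul, ih]) s

lemma eDiff_neg (n : ℕ) [NeZero n] (a b : Fin n) : eDiff n b a = - eDiff n a b := by
  apply Subtype.ext
  show Pi.single b 1 - Pi.single a 1 = -(Pi.single a 1 - Pi.single b 1 : Fin n → ℤ)
  ring


/-- For `n` prime, a nontrivial shift-invariant character `κ : M → ℂˣ` satisfies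
`κ(e_i − e_j) ≠ 1` for all `i ≠ j`. -/
theorem stmt5 (n : ℕ) (hn : n.Prime) [NeZero n] (κ : AddChar (sumZero n) ℂˣ)
    (hinv : ∀ z : sumZero n, κ (shiftM n z) = κ z)
    (hnontriv : ∃ z : sumZero n, κ z ≠ 1) :
    ∀ i j : Fin n, i ≠ j → κ (eDiff n i j) ≠ 1 := by
  intro i j hij h1
  -- shift invariance for eDiff
  have hshift1 : ∀ a b : Fin n, κ (eDiff n (a + 1) (b + 1)) = κ (eDiff n a b) := by
    intro a b
    rw [← shiftM_eDiff n a b, hinv]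
  open Fin.NatCast in
  have hshiftN : ∀ (m : ℕ) (a b : Fin n),
      κ (eDiff n (a + (m : Fin n)) (b + (m : Fin n))) = κ (eDiff n a b) := by
    intro m
    induction m with
    | zero => intro a b; simp
    | succ m ih =>
      intro a b
      have : ((m + 1 : ℕ) : Fin n) = (m : Fin n) + 1 := by push_cast; ring
      rw [this, ← add_assoc, ← add_assoc, hshift1, ih]
  open Fin.NatCast in
  have hshift : ∀ (k a b : Fin n), κ (eDiff n (a + k) (b + k)) = κ (eDiff n a b) := by
    intro k a b
    have := hshiftN k.val a b
    rwa [Fin.cast_val_eq_self] at this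
  set d := j - i with hd
  have hd0 : d ≠ 0 := sub_ne_zero.mpr (Ne.symm hij)
  -- κ (eDiff 0 d) = 1
  have hbase : κ (eDiff n 0 d) = 1 := by
    have := hshift i 0 d
    rw [zero_add, sub_add_cancel] at this
    rw [← this]
    exact h1
  -- κ (eDiff 0 (m • d)) = 1 for all m : ℕ
  have hmul : ∀ m : ℕ, κ (eDiff n 0 (m • d)) = 1 := by
    intro m
    induction m with
    | zero => simp [eDiff_self, AddChar.map_zero_eq_one]
    | succ m ih =>
      have hstep : κ (eDiff n (m • d) (m • d + d)) = 1 := by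
        have := hshift (m • d) 0 d
        rw [zero_add, add_comm d (m • d)] at this
        rw [this, hbase]
      have : eDiff n 0 ((m + 1) • d) = eDiff n 0 (m • d) + eDiff n (m • d) (m • d + d) := by
        rw [eDiff_add, succ_nsmul]
      rw [this, AddChar.map_add_eq_mul, ih, hstep, one_mul]
  -- hence κ (eDiff 0 j') = 1 for all j'
  have hall : ∀ j' : Fin n, κ (eDiff n 0 j') = 1 := by
    intro j'
    have hcard : Nat.card (Fin n) = n := by simp
    haveI : Fact n.Prime := ⟨hn⟩
    have hmem : j' ∈ AddSubmonoid.multiples d :=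
      mem_multiples_of_prime_card hcard hd0
    obtain ⟨m, hm⟩ := hmem
    rw [← hm]
    exact hmul m
  -- κ is trivial
  obtain ⟨z, hz⟩ := hnontriv
  apply hz
  have hrepr : z = ∑ j', (z : Fin n → ℤ) j' • eDiff n j' 0 := by
    apply Subtype.ext
    rw [AddSubgroup.val_finset_sum]
    funext t
    have hsum : ∑ x, (z : Fin n → ℤ) x = 0 := z.2
    simp only [AddSubgroup.coe_zsmul, eDiff]
    simp only [Pi.smul_apply, smul_eq_mul, Finset.sum_apply,
      Pi.sub_apply, Pi.single_apply, mul_sub]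
    simp only [Finset.sum_sub_distrib, mul_ite, mul_one, mul_zero]
    rw [Finset.sum_ite_eq Finset.univ t ((z : Fin n → ℤ))]
    by_cases ht : t = 0 <;> simp [ht, hsum]
  rw [hrepr, addChar_map_sum]
  apply Finset.prod_eq_one
  intro j' _
  rw [AddChar.map_zsmul_eq_zpow, eDiff_neg, AddChar.map_neg_eq_inv, hall, inv_one, one_zpow]
end

section
/- Let t = diag(t₁, …, tₙ) be an invertible diagonal matrix over a field k. The determinant of the linear map N ↦ t N t⁻¹ on the space of strictly upper triangular n×n matrices equals ∏_{1 ≤ i < j ≤ n} (t_i / t_j). -/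
/-- The space of strictly upper triangular `n × n` matrices over `k`. -/
def strictUpper (n : ℕ) (k : Type*) [Field k] : Submodule k (Matrix (Fin n) (Fin n) k) where
  carrier := {N | ∀ i j : Fin n, j ≤ i → N i j = 0}
  zero_mem' := by intro i j _; rfl
  add_mem' := by
    intro a b ha hb i j hij
    simp [Matrix.add_apply, ha i j hij, hb i j hij]
  smul_mem' := by
    intro c a ha i j hij
    simp [Matrix.smul_apply, ha i j hij]

/-- Conjugation `N ↦ t N t⁻¹` by the diagonal matrix `t = diag(d)`, as a linear map on
matrices. -/
def conjMap {n : ℕ} {k : Type*} [Field k] (d : Fin n → k) :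
    Matrix (Fin n) (Fin n) k →ₗ[k] Matrix (Fin n) (Fin n) k where
  toFun N := Matrix.diagonal d * N * Matrix.diagonal (fun i => (d i)⁻¹)
  map_add' a b := by rw [Matrix.mul_add, Matrix.add_mul]
  map_smul' c a := by
    simp [Matrix.mul_smul, Matrix.smul_mul]

lemma conjMap_mem_strictUpper {n : ℕ} {k : Type*} [Field k] (d : Fin n → k) :
    ∀ N ∈ strictUpper n k, conjMap d N ∈ strictUpper n k := by
  intro N hN i j hij
  simp only [conjMap, LinearMap.coe_mk, AddHom.coe_mk, Matrix.diagonal_mul, Matrix.mul_diagonal]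
  rw [hN i j hij]
  ring

def strictUpperEquiv (n : ℕ) (k : Type*) [Field k] :
    (strictUpper n k) ≃ₗ[k] ({p : Fin n × Fin n // p.1 < p.2} → k) where
  toFun N p := N.1 p.1.1 p.1.2
  map_add' a b := rfl
  map_smul' c a := rfl
  invFun f := ⟨Matrix.of fun i j => if h : i < j then f ⟨(i, j), h⟩ else 0, by
    intro i j hij
    simp [Matrix.of_apply, not_lt_of_ge hij]⟩
  left_inv N := by
    ext i j
    by_cases h : i < j
    · simp [h]
    · simp only [Matrix.of_apply, dif_neg h]
      exact (N.2 i j (not_lt.mp h)).symm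
  right_inv f := by
    ext p
    simp [p.2]

/-- The determinant of the conjugation `N ↦ t N t⁻¹` by `t = diag(d₁, …, dₙ)` on the space
of strictly upper triangular matrices equals `∏_{i < j} dᵢ / dⱼ`. -/
theorem stmt10 {n : ℕ} {k : Type*} [Field k] (d : Fin n → k) (hd : ∀ i, d i ≠ 0) :
    LinearMap.det ((conjMap d).restrict (conjMap_mem_strictUpper d)) =
      ∏ p ∈ Finset.univ.filter (fun p : Fin n × Fin n => p.1 < p.2), d p.1 / d p.2 := by
  classical
  let b := Module.Basis.ofEquivFun (strictUpperEquiv n k)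
  rw [← LinearMap.det_toMatrix b]
  have hmat : LinearMap.toMatrix b b ((conjMap d).restrict (conjMap_mem_strictUpper d)) =
      Matrix.diagonal (fun p : {p : Fin n × Fin n // p.1 < p.2} => d p.1.1 / d p.1.2) := by
    ext p q
    rw [LinearMap.toMatrix_apply, Module.Basis.ofEquivFun_repr_apply]
    have hb : (b q).1 = Matrix.of fun i j =>
        if h : i < j then (Pi.single q (1 : k) : {p : Fin n × Fin n // p.1 < p.2} → k) ⟨(i, j), h⟩ else 0 := by
      have hco := Module.Basis.coe_ofEquivFun (strictUpperEquiv n k)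
      simp only [b, hco]
      rfl
    show ((conjMap d) (b q).1) p.1.1 p.1.2 = _
    simp only [conjMap, LinearMap.coe_mk, AddHom.coe_mk, Matrix.diagonal_mul, Matrix.mul_diagonal,
      hb, Matrix.of_apply, dif_pos p.2]
    have hpe : (⟨(p.1.1, p.1.2), p.2⟩ : {p : Fin n × Fin n // p.1 < p.2}) = p :=
      Subtype.ext (Prod.ext rfl rfl)
    rw [hpe, Pi.single_apply]
    rcases eq_or_ne p q with rfl | hpq
    · simp [div_eq_mul_inv, Matrix.diagonal]
    · rw [if_neg hpq, Matrix.diagonal_apply_ne _ hpq]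
      ring
  rw [hmat, Matrix.det_diagonal]
  rw [← Finset.prod_subtype (Finset.univ.filter (fun p : Fin n × Fin n => p.1 < p.2))
    (fun p => by simp) (fun p : Fin n × Fin n => d p.1 / d p.2)]
end
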